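/- For nonnegative integers n, r, the greatest maximizing index K of the sequence k ↦ {n+r brace k+r}_r (0 ≤ k ≤ n) satisfies |K − (B_{n+1}(1;r)/B_n(1;r) − (r+1))| < 1, where B_n(1;r) = Σ_{k=0}^n {n+r brace k+r}_r is the r-Bell number. -/

import Mathlib

open Finset

/-- `𝒜` is a set partition of `Fin N`: blocks are nonempty and every element
lies in exactly one block. -/
def IsSetPartition {N : ℕ} (𝒜 : Finset (Finset (Fin N))) : Prop :=
  (∀ t ∈ 𝒜, t.Nonempty) ∧ ∀ x : Fin N, ∃! t, t ∈ 𝒜 ∧ x ∈ t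

/-- The elements of `S` lie in pairwise distinct blocks of `𝒜`. -/
def DistinctBlocks {N : ℕ} (𝒜 : Finset (Finset (Fin N))) (S : Set (Fin N)) : Prop :=
  ∀ a ∈ S, ∀ b ∈ S, a ≠ b → ∀ t ∈ 𝒜, ¬(a ∈ t ∧ b ∈ t)

/-- The `r`-Stirling number of the second kind `{n+r brace k+r}_r`: the number of
partitions of `{1,…,n+r}` into `k+r` nonempty blocks with `1,…,r` in distinct blocks. -/
noncomputable def rStirling (r n k : ℕ) : ℕ :=
  Nat.card {𝒜 : Finset (Finset (Fin (n + r))) //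
    IsSetPartition 𝒜 ∧ 𝒜.card = k + r ∧ DistinctBlocks 𝒜 {x | (x : ℕ) < r}}

/-- The `(r₁,r₂)`-Stirling number of the second kind `{n+r₁+r₂ brace k+r₂}_{r₁,r₂}`. -/
noncomputable def rrStirling (r₁ r₂ n k : ℕ) : ℕ :=
  Nat.card {𝒜 : Finset (Finset (Fin (n + r₁ + r₂))) //
    IsSetPartition 𝒜 ∧ 𝒜.card = k + r₂ ∧
    DistinctBlocks 𝒜 {x | (x : ℕ) < r₁} ∧
    DistinctBlocks 𝒜 {x | r₁ ≤ (x : ℕ) ∧ (x : ℕ) < r₁ + r₂}}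

/-- The `r`-Bell polynomial `B_n(z;r) = Σ_{k=0}^n {n+r brace k+r}_r z^k`. -/
noncomputable def rBell (r n : ℕ) (z : ℝ) : ℝ :=
  ∑ k ∈ range (n + 1), (rStirling r n k : ℝ) * z ^ k

/-- The `(r₁,r₂)`-Bell polynomial `B_n(z;r₁,r₂) = Σ_{k=0}^{n+r₁} {n+r₁+r₂ brace k+r₂}_{r₁,r₂} z^k`. -/
noncomputable def rrBell (r₁ r₂ n : ℕ) (z : ℝ) : ℝ :=
  ∑ k ∈ range (n + r₁ + 1), (rrStirling r₁ r₂ n k : ℝ) * z ^ k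

/-!
Removing the largest element of `{1, …, n + 1 + r}` gives the recurrence
`{n+1+r, k+1+r}_r = (k + 1 + r) {n+r, k+1+r}_r + {n+r, k+r}_r`, that is
`B_{n+1}(z) = z B_n'(z) + (z + r) B_n(z)`. The right-hand side is `z^(1-r) e^(-z)` times the
derivative of `z^r e^z B_n(z)`, so Rolle's theorem shows by induction that `B_n(z; r)` has only
simple, real, nonpositive roots. Hence `{n+r, k+r}_r / B_n(1; r)` is the distribution of a
shifted sum of independent Bernoulli variables, with mean
`B_n'(1) / B_n(1) = B_{n+1}(1) / B_n(1) - (r + 1)`, and by Darroch's theorem every mode of such a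
distribution lies within distance `1` of its mean.
-/

open Polynomial

/-- The generating polynomial of a sum of independent Bernoulli variables with parameters
`p ∈ s`. -/
noncomputable def poissonBinomial (s : Multiset ℝ) : ℝ[X] :=
  (s.map fun p => C (1 - p) + C p * X).prod

section PoissonBinomial

variable {s : Multiset ℝ}

@[simp] lemma poissonBinomial_zero : poissonBinomial 0 = 1 := by simp [poissonBinomial]

@[simp] lemma poissonBinomial_cons (p : ℝ) (s : Multiset ℝ) :
    poissonBinomial (p ::ₘ s) = (C (1 - p) + C p * X) * poissonBinomial s := by
  simp [poissonBinomial]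

lemma coeff_linear_mul_zero (a b : ℝ) (q : ℝ[X]) :
    ((C a + C b * X) * q).coeff 0 = a * q.coeff 0 := by
  simp [add_mul, mul_assoc]

lemma coeff_linear_mul_succ (a b : ℝ) (q : ℝ[X]) (k : ℕ) :
    ((C a + C b * X) * q).coeff (k + 1) = a * q.coeff (k + 1) + b * q.coeff k := by
  simp [add_mul, mul_assoc]

lemma natDegree_poissonBinomial_le (s : Multiset ℝ) :
    (poissonBinomial s).natDegree ≤ Multiset.card s := by
  induction s using Multiset.induction_on with
  | empty => simp
  | cons p s ih =>
    have h : (C (1 - p) + C p * X).natDegree ≤ 1 := add_comm (C (1 - p)) _ ▸ natDegree_linear_le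
    rw [poissonBinomial_cons, Multiset.card_cons]
    exact natDegree_mul_le.trans (by omega)

lemma coeff_poissonBinomial_nonneg (hs : ∀ p ∈ s, p ∈ Set.Icc (0 : ℝ) 1) (k : ℕ) :
    0 ≤ (poissonBinomial s).coeff k := by
  induction s using Multiset.induction_on generalizing k with
  | empty => rw [poissonBinomial_zero, coeff_one]; split_ifs <;> norm_num
  | cons p s ih =>
    obtain ⟨hp0, hp1⟩ := hs p (Multiset.mem_cons_self p s)
    have ih' := ih fun q hq => hs q (Multiset.mem_cons_of_mem hq)
    rw [poissonBinomial_cons]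
    cases k with
    | zero => rw [coeff_linear_mul_zero]; exact mul_nonneg (by linarith) (ih' 0)
    | succ k =>
      rw [coeff_linear_mul_succ]
      exact add_nonneg (mul_nonneg (by linarith) (ih' _)) (mul_nonneg hp0 (ih' _))

lemma coeff_zero_poissonBinomial_pos (hs : ∀ p ∈ s, p < 1) :
    0 < (poissonBinomial s).coeff 0 := by
  rw [coeff_zero_eq_eval_zero, poissonBinomial, eval_multiset_prod, Multiset.map_map]
  refine Multiset.prod_pos fun x hx => ?_
  obtain ⟨p, hp, rfl⟩ := Multiset.mem_map.mp hx
  simpa using hs p hp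

lemma eval_one_poissonBinomial (s : Multiset ℝ) : (poissonBinomial s).eval 1 = 1 := by
  simp [poissonBinomial, eval_multiset_prod]

lemma derivative_poissonBinomial (s : Multiset ℝ) :
    derivative (poissonBinomial s) = (s.map fun p => C p * poissonBinomial (s.erase p)).sum := by
  classical
  rw [poissonBinomial, derivative_prod]
  congr 1
  refine Multiset.map_congr rfl fun p _ => ?_
  rw [derivative_add, derivative_C, zero_add, derivative_C_mul_X, mul_comm, poissonBinomial]

lemma eval_one_derivative_poissonBinomial (s : Multiset ℝ) :
    (derivative (poissonBinomial s)).eval 1 = s.sum := by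
  rw [derivative_poissonBinomial, ← coe_evalRingHom, map_multiset_sum, Multiset.map_map]
  simp [Function.comp_def, eval_one_poissonBinomial]

lemma succ_mul_coeff_poissonBinomial_succ (s : Multiset ℝ) (k : ℕ) :
    (k + 1 : ℝ) * (poissonBinomial s).coeff (k + 1) =
      (s.map fun p => p * (poissonBinomial (s.erase p)).coeff k).sum := by
  have h := congrArg (fun q => q.coeff k) (derivative_poissonBinomial s)
  simp only [coeff_derivative] at h
  rw [mul_comm, h, ← lcoeff_apply, map_multiset_sum, Multiset.map_map]
  simp [Function.comp_def]

lemma eval_one_derivative_X_pow_mul_poissonBinomial (m : ℕ) (s : Multiset ℝ) :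
    (derivative (X ^ m * poissonBinomial s)).eval 1 = m + s.sum := by
  simp [derivative_mul, derivative_X_pow, eval_one_poissonBinomial,
    eval_one_derivative_poissonBinomial]

lemma coeff_poissonBinomial_map_one_sub {j k : ℕ} (h : j + k = Multiset.card s) :
    (poissonBinomial (s.map (1 - ·))).coeff j = (poissonBinomial s).coeff k := by
  induction s using Multiset.induction_on generalizing j k with
  | empty =>
    obtain ⟨rfl, rfl⟩ : j = 0 ∧ k = 0 := by simpa using h
    simp
  | cons p s ih =>
    have hdeg (i : ℕ) (hi : Multiset.card s < i) := coeff_eq_zero_of_natDegree_lt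
      ((natDegree_poissonBinomial_le s).trans_lt hi)
    rw [Multiset.card_cons] at h
    rw [Multiset.map_cons, poissonBinomial_cons, poissonBinomial_cons, sub_sub_cancel]
    rcases j with _ | j <;> rcases k with _ | k
    · omega
    · rw [coeff_linear_mul_zero, coeff_linear_mul_succ, hdeg (k + 1) (by omega),
        ih (j := 0) (k := k) (by omega)]
      ring
    · rw [coeff_linear_mul_zero, coeff_linear_mul_succ, coeff_eq_zero_of_natDegree_lt
        ((natDegree_poissonBinomial_le _).trans_lt (by rw [Multiset.card_map]; omega)),
        ih (j := j) (k := 0) (by omega)]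
      ring
    · rw [coeff_linear_mul_succ, coeff_linear_mul_succ, ih (j := j + 1) (k := k) (by omega),
        ih (j := j) (k := k + 1) (by omega)]
      ring

end PoissonBinomial

section Darroch

variable {s : Multiset ℝ}

lemma coeff_poissonBinomial_lt_succ_of_forall_lt_erase (hs : ∀ p ∈ s, p ∈ Set.Ioo (0 : ℝ) 1)
    {k : ℕ} (hk : (k + 1 : ℝ) ≤ s.sum)
    (herase : ∀ p ∈ s, (poissonBinomial s).coeff k < (poissonBinomial (s.erase p)).coeff k) :
    (poissonBinomial s).coeff k < (poissonBinomial s).coeff (k + 1) := by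
  have hne : s ≠ 0 := by rintro rfl; simp at hk; linarith
  have hlt := Multiset.sum_lt_sum_of_nonempty hne
    fun p hp => mul_lt_mul_of_pos_left (herase p hp) (hs p hp).1
  rw [← succ_mul_coeff_poissonBinomial_succ, Multiset.sum_map_mul_right, Multiset.map_id'] at hlt
  have h0 := coeff_poissonBinomial_nonneg (fun p hp => Set.Ioo_subset_Icc_self (hs p hp)) k
  nlinarith

theorem coeff_poissonBinomial_lt_succ (hs : ∀ p ∈ s, p ∈ Set.Ioo (0 : ℝ) 1) {k : ℕ}
    (hk : (k + 1 : ℝ) ≤ s.sum) :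
    (poissonBinomial s).coeff k < (poissonBinomial s).coeff (k + 1) := by
  induction k generalizing s with
  | zero =>
    refine coeff_poissonBinomial_lt_succ_of_forall_lt_erase hs hk fun p hp => ?_
    have hpos := coeff_zero_poissonBinomial_pos (s := s.erase p)
      fun q hq => (hs q (Multiset.mem_of_mem_erase hq)).2
    conv_lhs => rw [← Multiset.cons_erase hp, poissonBinomial_cons, coeff_linear_mul_zero]
    nlinarith [(hs p hp).1]
  | succ k ih =>
    refine coeff_poissonBinomial_lt_succ_of_forall_lt_erase hs hk fun p hp => ?_
    obtain ⟨hp0, hp1⟩ := hs p hp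
    have hsum := Multiset.sum_erase hp
    have hlt := ih (s := s.erase p) (fun q hq => hs q (Multiset.mem_of_mem_erase hq))
      (by push_cast at hk; linarith)
    conv_lhs => rw [← Multiset.cons_erase hp, poissonBinomial_cons, coeff_linear_mul_succ]
    nlinarith

theorem coeff_poissonBinomial_succ_lt (hs : ∀ p ∈ s, p ∈ Set.Ioo (0 : ℝ) 1) {k : ℕ}
    (hk : s.sum ≤ k) (hks : k < Multiset.card s) :
    (poissonBinomial s).coeff (k + 1) < (poissonBinomial s).coeff k := by
  obtain ⟨j, hj⟩ : ∃ j, j + (k + 1) = Multiset.card s := ⟨Multiset.card s - (k + 1), by omega⟩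
  rw [← coeff_poissonBinomial_map_one_sub (s := s) hj,
    ← coeff_poissonBinomial_map_one_sub (s := s) (j := j + 1) (k := k) (by omega)]
  refine coeff_poissonBinomial_lt_succ (fun q hq => ?_) ?_
  · obtain ⟨p, hp, rfl⟩ := Multiset.mem_map.mp hq
    obtain ⟨hp0, hp1⟩ := hs p hp
    constructor <;> linarith
  · have hcard : (Multiset.card s : ℝ) = j + (k + 1) := by exact_mod_cast hj.symm
    rw [Multiset.sum_map_sub, Multiset.map_const', Multiset.sum_replicate, Multiset.map_id',
      nsmul_eq_mul, mul_one, hcard]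
    linarith

/-- Darroch's theorem: a mode of a Poisson binomial distribution is within `1` of its mean. -/
theorem abs_sub_sum_lt_one_of_coeff_le (hs : ∀ p ∈ s, p ∈ Set.Ioo (0 : ℝ) 1) {K : ℕ}
    (hK : K ≤ Multiset.card s)
    (hmax : ∀ j ≤ Multiset.card s, (poissonBinomial s).coeff j ≤ (poissonBinomial s).coeff K) :
    |(K : ℝ) - s.sum| < 1 := by
  have hsum0 : 0 ≤ s.sum := Multiset.sum_nonneg fun p hp => (hs p hp).1.le
  rw [abs_sub_lt_iff]
  constructor
  · by_contra! h
    obtain ⟨k, rfl⟩ : ∃ k, K = k + 1 := Nat.exists_eq_add_one.mpr (by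
      have : (0 : ℝ) < K := by linarith
      exact_mod_cast this)
    push_cast at h
    linarith [coeff_poissonBinomial_succ_lt hs (k := k) (by linarith) (by omega),
      hmax k (by omega)]
  · by_contra! h
    have hcard : K + 1 ≤ Multiset.card s := by
      have := Multiset.sum_le_card_nsmul s 1 fun p hp => (hs p hp).2.le
      rw [nsmul_eq_mul, mul_one] at this
      exact_mod_cast (by linarith : (K + 1 : ℝ) ≤ Multiset.card s)
    linarith [coeff_poissonBinomial_lt_succ hs (k := K) (by linarith), hmax (K + 1) hcard]

theorem abs_sub_lt_one_of_coeff_X_pow_mul_le (hs : ∀ p ∈ s, p ∈ Set.Ioo (0 : ℝ) 1) (m : ℕ)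
    {K : ℕ} (hK : K ≤ m + Multiset.card s)
    (hmax : ∀ j ≤ m + Multiset.card s,
      (X ^ m * poissonBinomial s).coeff j ≤ (X ^ m * poissonBinomial s).coeff K) :
    |(K : ℝ) - (m + s.sum)| < 1 := by
  have hmK : m ≤ K := by
    by_contra! h
    have hm := hmax m (by omega)
    rw [coeff_X_pow_mul', coeff_X_pow_mul', if_pos le_rfl, if_neg (by omega), Nat.sub_self] at hm
    linarith [coeff_zero_poissonBinomial_pos fun p hp => (hs p hp).2]
  obtain ⟨k, rfl⟩ := Nat.exists_eq_add_of_le hmK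
  have hk := abs_sub_sum_lt_one_of_coeff_le hs (K := k) (by omega) fun j hj => by
    simpa only [add_comm m, coeff_X_pow_mul] using hmax (j + m) (by omega)
  rw [Nat.cast_add, add_sub_add_left_eq_sub]
  exact hk

/-- `X - y = (1 - y) ((1 - p) + p X)` with `p = (1 - y)⁻¹ ∈ (0, 1)` when `y < 0`. -/
lemma exists_prod_X_sub_C_eq {u : Multiset ℝ} (hu : ∀ y ∈ u, y ≤ 0) :
    ∃ (c : ℝ) (m : ℕ) (s : Multiset ℝ), 0 < c ∧ (∀ p ∈ s, p ∈ Set.Ioo (0 : ℝ) 1) ∧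
      m + Multiset.card s = Multiset.card u ∧
      (u.map fun y => X - C y).prod = C c * (X ^ m * poissonBinomial s) := by
  set v := u.filter (· ≠ 0)
  have hv : ∀ y ∈ v, y < 0 := fun y hy =>
    have hy' := Multiset.mem_filter.mp hy
    (hu y hy'.1).lt_of_ne hy'.2
  refine ⟨(v.map (1 - ·)).prod, u.count 0, v.map fun y => (1 - y)⁻¹, ?_, ?_, ?_, ?_⟩
  · refine Multiset.prod_pos fun x hx => ?_
    obtain ⟨y, hy, rfl⟩ := Multiset.mem_map.mp hx
    linarith [hv y hy]
  · intro p hp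
    obtain ⟨y, hy, rfl⟩ := Multiset.mem_map.mp hp
    have := hv y hy
    exact ⟨inv_pos.mpr (by linarith), inv_lt_one_of_one_lt₀ (by linarith)⟩
  · rw [Multiset.card_map, ← Multiset.card_replicate (u.count 0) (0 : ℝ), ← Multiset.filter_eq',
      ← Multiset.card_add, Multiset.filter_add_not]
  · have hlin : ∀ y ∈ v, X - C y = C (1 - y) * (C (1 - (1 - y)⁻¹) + C (1 - y)⁻¹ * X) := by
      intro y hy
      have : 1 - y ≠ 0 := by linarith [hv y hy]
      rw [mul_add, ← mul_assoc, ← C_mul, ← C_mul, mul_sub, mul_one, mul_inv_cancel₀ this,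
        C_1, one_mul]
      simp only [map_sub, C_1]
      ring
    conv_lhs => rw [← Multiset.filter_add_not (· = 0) u]
    rw [Multiset.map_add, Multiset.prod_add, Multiset.filter_eq', Multiset.map_replicate,
      Multiset.prod_replicate, map_zero, sub_zero, Multiset.map_congr rfl hlin,
      Multiset.prod_map_mul, poissonBinomial, Multiset.map_map, map_multiset_prod C,
      Multiset.map_map]
    simp only [Function.comp_def]
    ring

theorem abs_sub_lt_one_of_coeff_le_of_roots_nonpos {u : Multiset ℝ} (hu : ∀ y ∈ u, y ≤ 0)
    {K : ℕ} (hK : K ≤ Multiset.card u)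
    (hmax : ∀ j ≤ Multiset.card u,
      (u.map fun y => X - C y).prod.coeff j ≤ (u.map fun y => X - C y).prod.coeff K) :
    |(K : ℝ) - (derivative (u.map fun y => X - C y).prod).eval 1 /
      (u.map fun y => X - C y).prod.eval 1| < 1 := by
  obtain ⟨c, m, s, hc, hs, hcard, hP⟩ := exists_prod_X_sub_C_eq hu
  rw [hP, derivative_C_mul, eval_C_mul, eval_C_mul, eval_one_derivative_X_pow_mul_poissonBinomial,
    eval_mul, eval_pow, eval_X, one_pow, one_mul, eval_one_poissonBinomial, mul_one,
    mul_div_cancel_left₀ _ hc.ne']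
  refine abs_sub_lt_one_of_coeff_X_pow_mul_le hs m (hcard ▸ hK) fun j hj => ?_
  have := hmax j (hcard ▸ hj)
  rwa [hP, coeff_C_mul, coeff_C_mul, mul_le_mul_iff_right₀ hc] at this

end Darroch

section RootCounting

open Filter Topology

lemma tendsto_pow_mul_exp_atBot_nhds_zero (k : ℕ) :
    Tendsto (fun z : ℝ => z ^ k * Real.exp z) atBot (𝓝 0) := by
  have h := ((Real.tendsto_pow_mul_exp_neg_atTop_nhds_zero k).comp
    tendsto_neg_atBot_atTop).const_mul ((-1 : ℝ) ^ k)
  rw [mul_zero] at h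
  refine h.congr fun z => ?_
  simp only [Function.comp_apply, neg_neg, ← mul_assoc, ← mul_pow]
  norm_num

lemma Polynomial.tendsto_eval_mul_exp_atBot_nhds_zero (P : ℝ[X]) :
    Tendsto (fun z : ℝ => P.eval z * Real.exp z) atBot (𝓝 0) := by
  have h := tendsto_finsetSum (range (P.natDegree + 1))
    fun k _ => (tendsto_pow_mul_exp_atBot_nhds_zero k).const_mul (P.coeff k)
  simp only [mul_zero, Finset.sum_const_zero] at h
  refine h.congr fun z => ?_
  rw [eval_eq_sum_range, Finset.sum_mul]
  exact Finset.sum_congr rfl fun k _ => (mul_assoc _ _ _).symm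

lemma exists_hasDerivAt_eq_zero_of_tendsto_atBot_of_pos {f f' : ℝ → ℝ}
    (hf : ∀ x, HasDerivAt f (f' x) x) (hlim : Tendsto f atBot (𝓝 0)) {a b : ℝ} (hab : a < b)
    (ha : 0 < f a) (hb : f b = 0) :
    ∃ c < b, f' c = 0 := by
  obtain ⟨w, hw, hfw⟩ := ((hlim.eventually (gt_mem_nhds ha)).and (eventually_lt_atBot a)).exists
  have hcont : ContinuousOn f (Set.Icc w b) := fun x _ => (hf x).continuousAt.continuousWithinAt
  obtain ⟨c, hc, hmax⟩ := isCompact_Icc.exists_isMaxOn (Set.nonempty_Icc.mpr (hfw.trans hab).le)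
    hcont
  have hac : f a ≤ f c := hmax ⟨hfw.le, hab.le⟩
  have hwc : w < c := hc.1.lt_of_ne fun h => by rw [← h] at hac; linarith
  have hcb : c < b := hc.2.lt_of_ne fun h => by rw [h] at hac; linarith
  exact ⟨c, hcb, (hmax.isLocalMax (Icc_mem_nhds hwc hcb)).hasDerivAt_eq_zero (hf c)⟩

lemma exists_hasDerivAt_eq_zero_of_tendsto_atBot {f f' : ℝ → ℝ}
    (hf : ∀ x, HasDerivAt f (f' x) x) (hlim : Tendsto f atBot (𝓝 0)) {a b : ℝ} (hab : a < b)
    (ha : f a ≠ 0) (hb : f b = 0) :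
    ∃ c < b, f' c = 0 := by
  rcases ha.lt_or_gt with ha | ha
  · obtain ⟨c, hcb, hc⟩ := exists_hasDerivAt_eq_zero_of_tendsto_atBot_of_pos
      (f := fun x => -f x) (fun x => (hf x).neg) (by simpa using hlim.neg) hab (by linarith)
      (by simp [hb])
    exact ⟨c, hcb, neg_eq_zero.mp hc⟩
  · exact exists_hasDerivAt_eq_zero_of_tendsto_atBot_of_pos hf hlim hab ha hb

/-- Rolle's theorem gives a zero of `f'` in each gap of `Z` and one below `min Z`. -/
theorem card_le_card_of_hasDerivAt {f f' : ℝ → ℝ} (hf : ∀ x, HasDerivAt f (f' x) x)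
    (hlim : Tendsto f atBot (𝓝 0)) {Z T : Finset ℝ} (hZ : ∀ x, f x = 0 ↔ x ∈ Z)
    (hT : ∀ x, f' x = 0 → ∀ z ∈ Z, x < z → x ∈ T) : #Z ≤ #T := by
  classical
  set S : Finset (WithBot ℝ) := insert ⊥ (Z.image (↑))
  set T' : Finset (WithBot ℝ) := T.image (↑)
  have hS : #S = #Z + 1 := by
    rw [card_insert_of_notMem (by simp), card_image_of_injective _ WithBot.coe_injective]
  have hT' : #(T' \ S) ≤ #T :=
    (Finset.card_le_card Finset.sdiff_subset).trans Finset.card_image_le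
  have key := Finset.card_le_sdiff_of_interleaved (s := S) (t := T') ?_
  · omega
  intro x hx y hy hxy hgap
  obtain ⟨b, hbZ, rfl⟩ : ∃ b ∈ Z, (b : WithBot ℝ) = y := by
    rcases Finset.mem_insert.mp hy with rfl | hy
    · exact absurd hxy not_lt_bot
    · simpa using hy
  have hmem (c : ℝ) (hc : f' c = 0) (hcb : c < b) : (c : WithBot ℝ) ∈ T' :=
    Finset.mem_image_of_mem _ (hT c hc b hbZ hcb)
  rcases Finset.mem_insert.mp hx with rfl | hx
  · have hb1 : f (b - 1) ≠ 0 := fun h => hgap _ (mem_insert_of_mem (mem_image_of_mem _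
      ((hZ _).mp h))) ⟨WithBot.bot_lt_coe _, WithBot.coe_lt_coe.mpr (by linarith)⟩
    obtain ⟨c, hcb, hc⟩ := exists_hasDerivAt_eq_zero_of_tendsto_atBot hf hlim (by linarith) hb1
      ((hZ b).mpr hbZ)
    exact ⟨c, hmem c hc hcb, WithBot.bot_lt_coe c, WithBot.coe_lt_coe.mpr hcb⟩
  · obtain ⟨a, haZ, rfl⟩ : ∃ a ∈ Z, (a : WithBot ℝ) = x := by simpa using hx
    have hab : a < b := WithBot.coe_lt_coe.mp hxy
    obtain ⟨c, ⟨hac, hcb⟩, hc⟩ := exists_hasDerivAt_eq_zero hab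
      (fun x _ => (hf x).continuousAt.continuousWithinAt)
      (((hZ a).mpr haZ).trans ((hZ b).mpr hbZ).symm) fun x _ => hf x
    exact ⟨c, hmem c hc hcb, WithBot.coe_lt_coe.mpr hac, WithBot.coe_lt_coe.mpr hcb⟩

lemma X_mul_derivative_X_pow_mul_add (r : ℕ) (P : ℝ[X]) :
    X * (derivative (X ^ r * P) + X ^ r * P) =
      X ^ r * (X * derivative P + (X + C (r : ℝ)) * P) := by
  rcases r with _ | r
  · simp only [pow_zero, one_mul, Nat.cast_zero, map_zero, add_zero]
    ring
  · simp only [derivative_mul, derivative_X_pow, Nat.add_sub_cancel, Nat.cast_add, Nat.cast_one,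
      map_add, map_one]
    ring

/-- Up to the factor `e ^ z / z`, `X P' + (X + r) P` is the derivative of `z ^ r e ^ z P(z)`. -/
theorem card_le_card_filter_neg_roots {P : ℝ[X]} (r : ℕ) {Z : Finset ℝ}
    (hZ : ∀ z, (X ^ r * P).eval z = 0 ↔ z ∈ Z) (hZ0 : ∀ z ∈ Z, z ≤ 0)
    (hQ : X * derivative P + (X + C (r : ℝ)) * P ≠ 0) :
    #Z ≤ #({y ∈ (X * derivative P + (X + C (r : ℝ)) * P).roots.toFinset | y < 0}) := by
  set R := X ^ r * P
  refine card_le_card_of_hasDerivAt (f := fun z => R.eval z * Real.exp z)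
    (f' := fun z => (derivative R + R).eval z * Real.exp z) (fun z => ?_)
    R.tendsto_eval_mul_exp_atBot_nhds_zero (fun z => ?_) fun c hc z hz hcz => ?_
  · refine ((R.hasDerivAt z).mul (Real.hasDerivAt_exp z)).congr_deriv ?_
    rw [eval_add]
    ring
  · simp [Real.exp_ne_zero, hZ]
  · have hc0 : c < 0 := hcz.trans_le (hZ0 z hz)
    have hid := congrArg (eval c) (X_mul_derivative_X_pow_mul_add r P)
    rw [eval_mul, eval_mul, eval_X, eval_pow, eval_X] at hid
    have hRc : (derivative R + R).eval c = 0 :=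
      (mul_eq_zero.mp hc).resolve_right (Real.exp_ne_zero c)
    rw [hRc, mul_zero, eq_comm] at hid
    rw [Finset.mem_filter, Multiset.mem_toFinset, mem_roots hQ, IsRoot.def]
    exact ⟨(mul_eq_zero.mp hid).resolve_left (pow_ne_zero r hc0.ne), hc0⟩

lemma Polynomial.Monic.eq_prod_roots_toFinset {P : ℝ[X]} (hP : P.Monic)
    (hroots : P.natDegree ≤ #P.roots.toFinset) : P = ∏ y ∈ P.roots.toFinset, (X - C y) := by
  have h1 := Multiset.toFinset_card_le P.roots
  have h2 := card_roots' P
  have hnodup : P.roots.Nodup :=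
    Multiset.toFinset_card_eq_card_iff_nodup.mp (by omega)
  rw [Finset.prod_eq_multiset_prod, Multiset.toFinset_val, Multiset.dedup_eq_self.mpr hnodup,
    prod_multiset_X_sub_C_of_monic_of_roots_card_eq hP (by omega)]

end RootCounting

abbrev SepPartition (M k s : ℕ) : Type :=
  {𝒜 : Finset (Finset (Fin M)) //
    IsSetPartition 𝒜 ∧ #𝒜 = k ∧ DistinctBlocks 𝒜 {x | (x : ℕ) < s}}

lemma rStirling_eq_card_sepPartition (r n k : ℕ) :
    rStirling r n k = Nat.card (SepPartition (n + r) (k + r) r) := rfl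

namespace IsSetPartition

variable {N : ℕ} {𝒜 : Finset (Finset (Fin N))}

lemma eq_of_mem (h : IsSetPartition 𝒜) {t₁ t₂ : Finset (Fin N)} (h₁ : t₁ ∈ 𝒜) (h₂ : t₂ ∈ 𝒜)
    {x : Fin N} (hx₁ : x ∈ t₁) (hx₂ : x ∈ t₂) : t₁ = t₂ :=
  (h.2 x).unique ⟨h₁, hx₁⟩ ⟨h₂, hx₂⟩

lemma card_le (h : IsSetPartition 𝒜) : #𝒜 ≤ N := by
  simpa using Finset.card_le_card_of_forall_subsingleton (t := univ) (fun t x => x ∈ t)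
    (fun t ht => (h.1 t ht).imp fun x hx => ⟨mem_univ x, hx⟩)
    fun x _ t₁ ht₁ t₂ ht₂ => h.eq_of_mem ht₁.1 ht₂.1 ht₁.2 ht₂.2

lemma le_card (h : IsSetPartition 𝒜) {s : ℕ} (hs : s ≤ N)
    (hD : DistinctBlocks 𝒜 {x | (x : ℕ) < s}) : s ≤ #𝒜 := by
  have := Finset.card_le_card_of_forall_subsingleton (s := {x : Fin N | (x : ℕ) < s}) (t := 𝒜)
    (fun x t => x ∈ t) (fun x _ => (h.2 x).exists)
    fun t ht x hx y hy => by_contra fun hxy =>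
      hD x (mem_filter.mp hx.1).2 y (mem_filter.mp hy.1).2 hxy t ht ⟨hx.2, hy.2⟩
  rwa [Fin.card_filter_val_lt, min_eq_right hs] at this

lemma eq_image_singleton (h : IsSetPartition 𝒜) (hD : DistinctBlocks 𝒜 {x | (x : ℕ) < N}) :
    𝒜 = univ.image ({·}) := by
  have hsingle (t) (ht : t ∈ 𝒜) (x) (hx : x ∈ t) : t = {x} :=
    eq_singleton_iff_unique_mem.mpr ⟨hx, fun y hy => by_contra fun hyx =>
      hD y y.isLt x x.isLt hyx t ht ⟨hy, hx⟩⟩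
  ext t
  simp only [mem_image, mem_univ, true_and]
  constructor
  · intro ht
    obtain ⟨x, hx⟩ := h.1 t ht
    exact ⟨x, (hsingle t ht x hx).symm⟩
  · rintro ⟨x, rfl⟩
    obtain ⟨t, ⟨ht, hx⟩, -⟩ := h.2 x
    rwa [← hsingle t ht x hx]

end IsSetPartition

lemma isSetPartition_image_singleton (N : ℕ) :
    IsSetPartition (univ.image ({·}) : Finset (Finset (Fin N))) := by
  refine ⟨fun t ht => ?_, fun x => ⟨{x}, by simp, ?_⟩⟩
  · obtain ⟨x, -, rfl⟩ := mem_image.mp ht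
    exact singleton_nonempty x
  · rintro t ⟨ht, hx⟩
    obtain ⟨y, -, rfl⟩ := mem_image.mp ht
    rw [mem_singleton.mp hx]

lemma card_sepPartition_self (M : ℕ) : Nat.card (SepPartition M M M) = 1 := by
  rw [Nat.card_eq_one_iff_unique]
  refine ⟨⟨fun 𝒜 ℬ => Subtype.ext ?_⟩,
    ⟨⟨univ.image ({·}), isSetPartition_image_singleton M, ?_, ?_⟩⟩⟩
  · rw [𝒜.2.1.eq_image_singleton 𝒜.2.2.2, ℬ.2.1.eq_image_singleton ℬ.2.2.2]
  · rw [card_image_of_injective _ singleton_injective, card_univ, Fintype.card_fin]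
  · rintro a - b - hab t ht ⟨ha, hb⟩
    obtain ⟨x, -, rfl⟩ := mem_image.mp ht
    exact hab ((mem_singleton.mp ha).trans (mem_singleton.mp hb).symm)

lemma card_sepPartition_eq_zero_of_lt {M k s : ℕ} (h : M < k) :
    Nat.card (SepPartition M k s) = 0 :=
  Nat.card_eq_zero.mpr <| .inl ⟨fun 𝒜 => by have := 𝒜.2.1.card_le; omega⟩

lemma card_sepPartition_eq_zero_of_lt_sep {M k s : ℕ} (hk : k < s) (hs : s ≤ M) :
    Nat.card (SepPartition M k s) = 0 :=
  Nat.card_eq_zero.mpr <| .inl ⟨fun 𝒜 => by have := 𝒜.2.1.le_card hs 𝒜.2.2.2; omega⟩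

lemma card_sepPartition_succ_zero (M s : ℕ) : Nat.card (SepPartition (M + 1) 0 s) = 0 :=
  Nat.card_eq_zero.mpr <| .inl ⟨fun 𝒜 => by
    obtain ⟨t, ⟨ht, -⟩, -⟩ := 𝒜.2.1.2 0
    rw [card_eq_zero.mp 𝒜.2.2.1] at ht
    exact notMem_empty t ht⟩

namespace SepPartition

variable {M : ℕ}

def up (c : Finset (Fin M)) : Finset (Fin (M + 1)) := c.map Fin.castSuccEmb

def down (t : Finset (Fin (M + 1))) : Finset (Fin M) := {y | y.castSucc ∈ t}

/-- Adds `Fin.last M` to the block `c` of `ℬ`, or as a new singleton block if `c = ∅`. -/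
def insertLast (ℬ : Finset (Finset (Fin M))) (c : Finset (Fin M)) :
    Finset (Finset (Fin (M + 1))) :=
  insert (insert (Fin.last M) (up c)) ((ℬ.erase c).image up)

def eraseLast (𝒜 : Finset (Finset (Fin (M + 1)))) : Finset (Finset (Fin M)) :=
  (𝒜.image down).erase ∅

def lastMates (𝒜 : Finset (Finset (Fin (M + 1)))) : Finset (Fin M) :=
  {y | ∃ t ∈ 𝒜, Fin.last M ∈ t ∧ y.castSucc ∈ t}

variable {c : Finset (Fin M)} {t : Finset (Fin (M + 1))} {y : Fin M}

@[simp] lemma castSucc_mem_up : y.castSucc ∈ up c ↔ y ∈ c := by simp [up]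

@[simp] lemma last_notMem_up : Fin.last M ∉ up c := by
  simp [up, Fin.castSucc_ne_last]

@[simp] lemma mem_down : y ∈ down t ↔ y.castSucc ∈ t := by simp [down]

@[simp] lemma down_up (c : Finset (Fin M)) : down (up c) = c := by ext; simp

lemma up_down (t : Finset (Fin (M + 1))) : up (down t) = t.erase (Fin.last M) := by
  ext x
  induction x using Fin.lastCases <;> simp [Fin.castSucc_ne_last]

@[simp] lemma down_insert_last (t : Finset (Fin (M + 1))) :
    down (insert (Fin.last M) t) = down t := by
  ext; simp [Fin.castSucc_ne_last]

lemma up_injective : Function.Injective (up (M := M)) :=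
  Function.LeftInverse.injective down_up

lemma mem_insertLast {ℬ : Finset (Finset (Fin M))} :
    t ∈ insertLast ℬ c ↔ t = insert (Fin.last M) (up c) ∨ ∃ u ∈ ℬ, u ≠ c ∧ up u = t := by
  simp only [insertLast, mem_insert, mem_image, mem_erase]
  grind

variable {ℬ : Finset (Finset (Fin M))}

lemma isSetPartition_insertLast (h : IsSetPartition ℬ) (hc : c = ∅ ∨ c ∈ ℬ) :
    IsSetPartition (insertLast ℬ c) := by
  refine ⟨fun t ht => ?_, fun x => ?_⟩
  · rcases mem_insertLast.mp ht with rfl | ⟨u, hu, -, rfl⟩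
    · exact insert_nonempty _ _
    · obtain ⟨y, hy⟩ := h.1 u hu
      exact ⟨y.castSucc, castSucc_mem_up.mpr hy⟩
  induction x using Fin.lastCases with
  | last =>
    refine ⟨_, ⟨mem_insert_self _ _, mem_insert_self _ _⟩, fun t ⟨ht, hlt⟩ => ?_⟩
    rcases mem_insertLast.mp ht with rfl | ⟨u, -, -, rfl⟩
    · rfl
    · exact absurd hlt last_notMem_up
  | cast y =>
    obtain ⟨u, ⟨hu, hyu⟩, huniq⟩ := h.2 y
    have hblock (t) (ht : t ∈ insertLast ℬ c) (hyt : y.castSucc ∈ t) :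
        t = if u = c then insert (Fin.last M) (up c) else up u := by
      rcases mem_insertLast.mp ht with rfl | ⟨v, hv, hvc, rfl⟩
      · have hyc : y ∈ c := by simpa [Fin.castSucc_ne_last] using hyt
        rw [huniq c ⟨hc.resolve_left (ne_empty_of_mem hyc), hyc⟩, if_pos rfl]
      · obtain rfl := huniq v ⟨hv, castSucc_mem_up.mp hyt⟩
        rw [if_neg hvc]
    refine ⟨_, ⟨?_, ?_⟩, fun t ht => hblock t ht.1 ht.2⟩ <;> split_ifs with huc
    · exact mem_insert_self _ _
    · exact mem_insertLast.mpr (.inr ⟨u, hu, huc, rfl⟩)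
    · exact mem_insert_of_mem (castSucc_mem_up.mpr (huc ▸ hyu))
    · exact castSucc_mem_up.mpr hyu

lemma distinctBlocks_insertLast {s : ℕ} (hs : s ≤ M) (hD : DistinctBlocks ℬ {x | (x : ℕ) < s})
    (hc : c = ∅ ∨ c ∈ ℬ) : DistinctBlocks (insertLast ℬ c) {x | (x : ℕ) < s} := by
  intro a ha b hb hab t ht ⟨hat, hbt⟩
  obtain ⟨a, rfl⟩ : ∃ a' : Fin M, a'.castSucc = a := ⟨⟨a, by simp at ha; omega⟩, rfl⟩
  obtain ⟨b, rfl⟩ : ∃ b' : Fin M, b'.castSucc = b := ⟨⟨b, by simp at hb; omega⟩, rfl⟩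
  simp only [Set.mem_ofPred_eq, Fin.val_castSucc] at ha hb
  have hab' : a ≠ b := fun h => hab (h ▸ rfl)
  rcases mem_insertLast.mp ht with rfl | ⟨u, hu, -, rfl⟩
  · simp only [mem_insert, Fin.castSucc_ne_last, castSucc_mem_up, false_or] at hat hbt
    exact hD a ha b hb hab' c (hc.resolve_left (ne_empty_of_mem hat)) ⟨hat, hbt⟩
  · exact hD a ha b hb hab' u hu ⟨castSucc_mem_up.mp hat, castSucc_mem_up.mp hbt⟩

lemma card_insertLast : #(insertLast ℬ c) = #(ℬ.erase c) + 1 := by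
  rw [insertLast, card_insert_of_notMem, card_image_of_injective _ up_injective]
  simp only [mem_image, not_exists, not_and]
  exact fun u _ hu => last_notMem_up (hu ▸ mem_insert_self _ _)

lemma eraseLast_insertLast (h : IsSetPartition ℬ) (hc : c = ∅ ∨ c ∈ ℬ) :
    eraseLast (insertLast ℬ c) = ℬ := by
  have h0 : ∅ ∉ ℬ := fun h0 => not_nonempty_empty (h.1 ∅ h0)
  rw [eraseLast, insertLast, image_insert, image_image]
  simp only [Function.comp_def, down_up, image_id', down_insert_last]
  rcases hc with rfl | hc
  · rw [erase_eq_of_notMem h0, erase_insert h0]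
  · rw [insert_erase hc, erase_eq_of_notMem h0]

lemma lastMates_insertLast : lastMates (insertLast ℬ c) = c := by
  ext y
  simp only [lastMates, mem_filter, mem_univ, true_and, mem_insertLast]
  constructor
  · rintro ⟨t, rfl | ⟨u, -, -, rfl⟩, hl, hy⟩
    · simpa [Fin.castSucc_ne_last] using hy
    · exact absurd hl last_notMem_up
  · exact fun hy =>
      ⟨_, .inl rfl, mem_insert_self _ _, mem_insert_of_mem (castSucc_mem_up.mpr hy)⟩

variable {𝒜 : Finset (Finset (Fin (M + 1)))}

lemma isSetPartition_eraseLast (h : IsSetPartition 𝒜) : IsSetPartition (eraseLast 𝒜) := by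
  refine ⟨fun u hu => nonempty_iff_ne_empty.mpr (ne_of_mem_erase hu), fun y => ?_⟩
  obtain ⟨t, ⟨ht, hyt⟩, huniq⟩ := h.2 y.castSucc
  refine ⟨down t, ⟨mem_erase.mpr ⟨ne_empty_of_mem (mem_down.mpr hyt), mem_image_of_mem _ ht⟩,
    mem_down.mpr hyt⟩, ?_⟩
  rintro u ⟨hu, hyu⟩
  obtain ⟨t', ht', rfl⟩ := mem_image.mp (mem_of_mem_erase hu)
  rw [huniq t' ⟨ht', mem_down.mp hyu⟩]

lemma distinctBlocks_eraseLast {s : ℕ} (hD : DistinctBlocks 𝒜 {x | (x : ℕ) < s}) :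
    DistinctBlocks (eraseLast 𝒜) {x | (x : ℕ) < s} := by
  intro a ha b hb hab u hu ⟨hau, hbu⟩
  obtain ⟨t, ht, rfl⟩ := mem_image.mp (mem_of_mem_erase hu)
  exact hD a.castSucc (by simpa using ha) b.castSucc (by simpa using hb)
    ((Fin.castSucc_injective _).ne hab) t ht ⟨mem_down.mp hau, mem_down.mp hbu⟩

lemma lastMates_eq_down (h : IsSetPartition 𝒜) {b : Finset (Fin (M + 1))} (hb : b ∈ 𝒜)
    (hlb : Fin.last M ∈ b) : lastMates 𝒜 = down b := by
  ext y
  simp only [lastMates, mem_filter, mem_univ, true_and, mem_down]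
  exact ⟨fun ⟨t, ht, hl, hy⟩ => h.eq_of_mem ht hb hl hlb ▸ hy, fun hy => ⟨b, hb, hlb, hy⟩⟩

lemma lastMates_eq_empty_or_mem (h : IsSetPartition 𝒜) :
    lastMates 𝒜 = ∅ ∨ lastMates 𝒜 ∈ eraseLast 𝒜 := by
  obtain ⟨b, ⟨hb, hlb⟩, -⟩ := h.2 (Fin.last M)
  rw [lastMates_eq_down h hb hlb, eraseLast, mem_erase]
  by_cases h0 : down b = ∅
  · exact .inl h0
  · exact .inr ⟨h0, mem_image_of_mem _ hb⟩

lemma insertLast_eraseLast (h : IsSetPartition 𝒜) :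
    insertLast (eraseLast 𝒜) (lastMates 𝒜) = 𝒜 := by
  obtain ⟨b, ⟨hb, hlb⟩, -⟩ := h.2 (Fin.last M)
  have hlast (t) (ht : t ∈ 𝒜) (htb : t ≠ b) : Fin.last M ∉ t :=
    fun hl => htb (h.eq_of_mem ht hb hl hlb)
  rw [lastMates_eq_down h hb hlb, insertLast, up_down, insert_erase hlb]
  conv_rhs => rw [← insert_erase hb]
  congr 1
  ext t
  simp only [eraseLast, mem_image, mem_erase]
  constructor
  · rintro ⟨u, ⟨hub, -, t', ht', rfl⟩, rfl⟩
    have ht'b : t' ≠ b := fun h => hub (h ▸ rfl)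
    rw [up_down, erase_eq_of_notMem (hlast t' ht' ht'b)]
    exact ⟨ht'b, ht'⟩
  · rintro ⟨htb, ht⟩
    have hlt := hlast t ht htb
    obtain ⟨x, hx⟩ := h.1 t ht
    obtain ⟨y, rfl⟩ := Fin.exists_castSucc_eq.mpr (ne_of_mem_of_not_mem hx hlt)
    have hyt := mem_down.mpr hx
    refine ⟨down t, ⟨fun hdt => htb (h.eq_of_mem ht hb hx (mem_down.mp (hdt ▸ hyt))),
      ne_empty_of_mem hyt, t, ht, rfl⟩, ?_⟩
    rw [up_down, erase_eq_of_notMem hlt]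

lemma card_eq_card_erase_eraseLast_add_one {𝒜 : Finset (Finset (Fin (M + 1)))}
    (h : IsSetPartition 𝒜) : #𝒜 = #((eraseLast 𝒜).erase (lastMates 𝒜)) + 1 := by
  conv_lhs => rw [← insertLast_eraseLast h]
  exact card_insertLast

def succEquiv {s : ℕ} (hs : s ≤ M) (k : ℕ) :
    SepPartition (M + 1) (k + 1) s ≃ (Σ ℬ : SepPartition M (k + 1) s, ℬ.1) ⊕ SepPartition M k s
    where
  toFun 𝒜 :=
    if h0 : lastMates 𝒜.1 = ∅ then
      .inr ⟨eraseLast 𝒜.1, isSetPartition_eraseLast 𝒜.2.1, by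
        have := card_eq_card_erase_eraseLast_add_one 𝒜.2.1
        rw [h0, erase_eq_of_notMem (s := eraseLast 𝒜.1) (notMem_erase _ _), 𝒜.2.2.1] at this
        omega, distinctBlocks_eraseLast 𝒜.2.2.2⟩
    else
      have hmem := (lastMates_eq_empty_or_mem 𝒜.2.1).resolve_left h0
      .inl ⟨⟨eraseLast 𝒜.1, isSetPartition_eraseLast 𝒜.2.1, by
        have := card_eq_card_erase_eraseLast_add_one 𝒜.2.1
        rw [card_erase_of_mem hmem, 𝒜.2.2.1] at this
        have := card_pos.mpr ⟨_, hmem⟩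
        omega, distinctBlocks_eraseLast 𝒜.2.2.2⟩, ⟨lastMates 𝒜.1, hmem⟩⟩
  invFun
    | .inl ⟨ℬ, c⟩ => ⟨insertLast ℬ.1 c.1, isSetPartition_insertLast ℬ.2.1 (.inr c.2), by
        rw [card_insertLast, card_erase_of_mem c.2, ℬ.2.2.1, Nat.add_sub_cancel],
        distinctBlocks_insertLast hs ℬ.2.2.2 (.inr c.2)⟩
    | .inr ℬ => ⟨insertLast ℬ.1 ∅, isSetPartition_insertLast ℬ.2.1 (.inl rfl), by
        rw [card_insertLast, erase_eq_of_notMem fun h0 => not_nonempty_empty (ℬ.2.1.1 ∅ h0),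
          ℬ.2.2.1], distinctBlocks_insertLast hs ℬ.2.2.2 (.inl rfl)⟩
  left_inv 𝒜 := by
    by_cases h0 : lastMates 𝒜.1 = ∅
    · simp only [dif_pos h0]
      exact Subtype.ext ((congrArg _ h0).symm.trans (insertLast_eraseLast 𝒜.2.1))
    · simp only [dif_neg h0]
      exact Subtype.ext (insertLast_eraseLast 𝒜.2.1)
  right_inv
    | .inl ⟨ℬ, c⟩ => by
      have h0 : lastMates (insertLast ℬ.1 c.1) ≠ ∅ := by
        rw [lastMates_insertLast]
        exact nonempty_iff_ne_empty.mp (ℬ.2.1.1 c c.2)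
      simp only [dif_neg h0]
      exact congrArg Sum.inl (Sigma.subtype_ext
        (Subtype.ext (eraseLast_insertLast ℬ.2.1 (.inr c.2))) lastMates_insertLast)
    | .inr ℬ => by
      simp only [lastMates_insertLast, dif_pos]
      exact congrArg Sum.inr (Subtype.ext (eraseLast_insertLast ℬ.2.1 (.inl rfl)))

end SepPartition

lemma card_sepPartition_succ_succ {M s : ℕ} (hs : s ≤ M) (k : ℕ) :
    Nat.card (SepPartition (M + 1) (k + 1) s) =
      (k + 1) * Nat.card (SepPartition M (k + 1) s) + Nat.card (SepPartition M k s) := by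
  classical
  rw [Nat.card_congr (SepPartition.succEquiv hs k), Nat.card_sum, Nat.card_sigma]
  simp only [Nat.card_eq_fintype_card, Fintype.card_coe]
  rw [Finset.sum_congr rfl fun ℬ _ => ℬ.2.2.1, sum_const, card_univ, smul_eq_mul, mul_comm]

theorem rStirling_succ_succ (r n k : ℕ) :
    rStirling r (n + 1) (k + 1) = (k + 1 + r) * rStirling r n (k + 1) + rStirling r n k := by
  simp only [rStirling_eq_card_sepPartition]
  rw [show n + 1 + r = n + r + 1 by omega, show k + 1 + r = k + r + 1 by omega]
  exact card_sepPartition_succ_succ (by omega) (k + r)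

theorem rStirling_succ_zero (r n : ℕ) : rStirling r (n + 1) 0 = r * rStirling r n 0 := by
  simp only [rStirling_eq_card_sepPartition, zero_add]
  rcases r with _ | r
  · rw [zero_mul]
    exact card_sepPartition_succ_zero n 0
  · rw [show n + 1 + (r + 1) = n + (r + 1) + 1 by omega, card_sepPartition_succ_succ (by omega),
      card_sepPartition_eq_zero_of_lt_sep r.lt_succ_self (by omega), add_zero]

theorem rStirling_zero_zero (r : ℕ) : rStirling r 0 0 = 1 := by
  rw [rStirling_eq_card_sepPartition, zero_add]
  exact card_sepPartition_self r

theorem rStirling_eq_zero_of_lt {r n k : ℕ} (h : n < k) : rStirling r n k = 0 :=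
  card_sepPartition_eq_zero_of_lt (by omega)

theorem rStirling_self (r n : ℕ) : rStirling r n n = 1 := by
  induction n with
  | zero => exact rStirling_zero_zero r
  | succ n ih =>
    rw [rStirling_succ_succ, rStirling_eq_zero_of_lt n.lt_succ_self, ih, mul_zero, zero_add]

lemma rStirling_zero_right (r n : ℕ) : rStirling r n 0 = r ^ n := by
  induction n with
  | zero => exact rStirling_zero_zero r
  | succ n ih => rw [rStirling_succ_zero, ih, pow_succ, mul_comm]

section rBell

noncomputable def rBellPoly (r n : ℕ) : ℝ[X] :=
  ∑ k ∈ range (n + 1), C (rStirling r n k : ℝ) * X ^ k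

variable (r n : ℕ)

@[simp] lemma coeff_rBellPoly (k : ℕ) : (rBellPoly r n).coeff k = rStirling r n k := by
  simp only [rBellPoly, finsetSum_coeff, coeff_C_mul_X_pow, sum_ite_eq, mem_range]
  split_ifs with hk
  · rfl
  · rw [rStirling_eq_zero_of_lt (by omega), Nat.cast_zero]

@[simp] lemma eval_rBellPoly (z : ℝ) : (rBellPoly r n).eval z = rBell r n z := by
  simp [rBellPoly, rBell, eval_finsetSum]

lemma rBellPoly_succ :
    rBellPoly r (n + 1) = X * derivative (rBellPoly r n) + (X + C (r : ℝ)) * rBellPoly r n := by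
  ext k
  rcases k with _ | k
  · simp [rStirling_succ_zero]
  · simp only [coeff_rBellPoly, rStirling_succ_succ, coeff_add, coeff_X_mul, coeff_derivative,
      add_mul, coeff_C_mul]
    push_cast
    ring

lemma natDegree_rBellPoly : (rBellPoly r n).natDegree = n := by
  refine natDegree_eq_of_le_of_coeff_ne_zero ?_ (by simp [rStirling_self])
  exact natDegree_sum_le_of_forall_le _ _ fun k hk =>
    natDegree_C_mul_X_pow_le _ k |>.trans (Nat.lt_succ_iff.mp (Finset.mem_range.mp hk))

lemma monic_rBellPoly : (rBellPoly r n).Monic := by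
  rw [Monic, leadingCoeff, natDegree_rBellPoly, coeff_rBellPoly, rStirling_self, Nat.cast_one]

lemma rBell_pos {z : ℝ} (hz : 0 < z) : 0 < rBell r n z := by
  rw [rBell]
  refine lt_of_lt_of_le ?_ (Finset.single_le_sum (fun k _ => by positivity)
    (Finset.self_mem_range_succ n))
  simp [rStirling_self, hz]

lemma nonpos_of_mem_roots_rBellPoly {y : ℝ} (hy : y ∈ (rBellPoly r n).roots) : y ≤ 0 := by
  rw [mem_roots (monic_rBellPoly r n).ne_zero, IsRoot.def, eval_rBellPoly] at hy
  by_contra! hy0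
  exact (rBell_pos r n hy0).ne' hy

lemma le_card_roots_rBellPoly_succ {s : Finset ℝ} (hs : ∀ y ∈ s, y ≤ 0)
    (hP : rBellPoly r n = ∏ y ∈ s, (X - C y)) :
    n + 1 ≤ #(rBellPoly r (n + 1)).roots.toFinset := by
  have hsn : #s = n := by rw [← natDegree_rBellPoly r n, hP, natDegree_finsetProd_X_sub_C_eq_card]
  have hevalP (z : ℝ) : (rBellPoly r n).eval z = 0 ↔ z ∈ s := by
    simp [hP, eval_prod, prod_eq_zero_iff, sub_eq_zero]
  have hcount {Z : Finset ℝ} (hZ : ∀ z, (X ^ r * rBellPoly r n).eval z = 0 ↔ z ∈ Z)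
      (hZ0 : ∀ z ∈ Z, z ≤ 0) : #Z ≤ #({y ∈ (rBellPoly r (n + 1)).roots.toFinset | y < 0}) := by
    have hQ := (monic_rBellPoly r (n + 1)).ne_zero
    rw [rBellPoly_succ] at hQ ⊢
    exact card_le_card_filter_neg_roots r hZ hZ0 hQ
  rcases Nat.eq_zero_or_pos r with rfl | hr
  · have h0 : (0 : ℝ) ∈ (rBellPoly 0 (n + 1)).roots.toFinset := by
      rw [Multiset.mem_toFinset, mem_roots (monic_rBellPoly 0 (n + 1)).ne_zero, IsRoot.def,
        ← coeff_zero_eq_eval_zero, coeff_rBellPoly, rStirling_zero_right, zero_pow n.succ_ne_zero,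
        Nat.cast_zero]
    have hlt := card_lt_card ((filter_ssubset (p := (· < 0))).mpr ⟨0, h0, lt_irrefl 0⟩)
    have := hcount (Z := s) (by simpa using hevalP) hs
    omega
  · have hs0 : (0 : ℝ) ∉ s := by
      rw [← hevalP, ← coeff_zero_eq_eval_zero, coeff_rBellPoly, rStirling_zero_right]
      positivity
    have := hcount (Z := insert 0 s) (fun z => by
      simp only [eval_mul, eval_pow, eval_X, mul_eq_zero, pow_eq_zero_iff hr.ne', hevalP,
        mem_insert])
      (by simpa using hs)
    rw [card_insert_of_notMem hs0, hsn] at this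
    exact this.trans (card_filter_le _ _)

theorem rBellPoly_eq_prod :
    ∃ t : Finset ℝ, (∀ y ∈ t, y ≤ 0) ∧ rBellPoly r n = ∏ y ∈ t, (X - C y) := by
  induction n with
  | zero => exact ⟨∅, by simp, by simp [rBellPoly, rStirling_zero_zero]⟩
  | succ n ih =>
    obtain ⟨s, hs, hP⟩ := ih
    refine ⟨_, fun y hy => nonpos_of_mem_roots_rBellPoly r (n + 1) (Multiset.mem_toFinset.mp hy),
      (monic_rBellPoly r (n + 1)).eq_prod_roots_toFinset ?_⟩
    rw [natDegree_rBellPoly]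
    exact le_card_roots_rBellPoly_succ r n hs hP

end rBell

theorem rStirling_max_index_bound_general (n r K : ℕ) (hK : K ≤ n)
    (hmax : ∀ j ≤ n, rStirling r n j ≤ rStirling r n K) :
    |(K : ℝ) - (rBell r (n + 1) 1 / rBell r n 1 - (r + 1))| < 1 := by
  obtain ⟨t, ht, hP⟩ := rBellPoly_eq_prod r n
  have hcard : Multiset.card t.val = n := by
    rw [← natDegree_rBellPoly r n, hP, natDegree_finsetProd_X_sub_C_eq_card, Finset.card_val]
  have hmean : rBell r (n + 1) 1 / rBell r n 1 - (r + 1) =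
      (derivative (rBellPoly r n)).eval 1 / (rBellPoly r n).eval 1 := by
    have hpos := rBell_pos r n one_pos
    rw [← eval_rBellPoly, rBellPoly_succ, eval_rBellPoly]
    simp only [eval_add, eval_mul, eval_X, eval_C, eval_rBellPoly, one_mul]
    field_simp
    ring
  rw [hmean, hP, Finset.prod_eq_multiset_prod]
  refine abs_sub_lt_one_of_coeff_le_of_roots_nonpos ht (hcard ▸ hK) fun j hj => ?_
  rw [← Finset.prod_eq_multiset_prod, ← hP, coeff_rBellPoly, coeff_rBellPoly]
  exact_mod_cast hmax j (hcard ▸ hj)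

/-- the greatest maximizing index $K$ of $k \mapsto {n+r \brace k+r}_r$
satisfies $|K - (B_{n+1}(1;r)/B_n(1;r) - (r+1))| < 1$. -/
theorem rStirling_max_index_bound (n r K : ℕ) (hK : K ≤ n)
    (hmax : ∀ j ≤ n, rStirling r n j ≤ rStirling r n K)
    (hgreatest : ∀ j ≤ n, rStirling r n j = rStirling r n K → j ≤ K) :
    |(K : ℝ) - (rBell r (n + 1) 1 / rBell r n 1 - (r + 1))| < 1 :=
  rStirling_max_index_bound_general n r K hK hmax
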